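/- For subspaces V, W of a finite-dimensional Euclidean space E, the angle σ(V, W) is strictly positive, i.e. σ(V,W) ∈ (0, 1]. -/

import Mathlib

open scoped InnerProductSpace

/-- The volume of a tuple of vectors: the square root of the determinant of
its Gram matrix. -/
noncomputable def tupleVol {E : Type*} [NormedAddCommGroup E] [InnerProductSpace ℝ E]
    {k : ℕ} (f : Fin k → E) : ℝ :=
  Real.sqrt (Matrix.det (Matrix.of fun i j => (inner ℝ (f i) (f j) : ℝ)))

/-- The angle `σ(V,W)` between two subspaces of a Euclidean space:
`vol(v w)/(vol(v)·vol(w))` for bases `v` of `V ⊓ (V ⊓ W)ᗮ` and `w` of `W ⊓ (V ⊓ W)ᗮ`,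
and `1` if `V ≤ W` or `W ≤ V`. -/
noncomputable def subAngle {E : Type*} [NormedAddCommGroup E] [InnerProductSpace ℝ E]
    [FiniteDimensional ℝ E] (V W : Submodule ℝ E) : ℝ :=
  letI := Classical.propDecidable (V ≤ W ∨ W ≤ V)
  if V ≤ W ∨ W ≤ V then 1
  else
    let v : Fin (Module.finrank ℝ ↥(V ⊓ (V ⊓ W)ᗮ)) → E :=
      fun i => ((Module.finBasis ℝ ↥(V ⊓ (V ⊓ W)ᗮ)) i : E)
    let w : Fin (Module.finrank ℝ ↥(W ⊓ (V ⊓ W)ᗮ)) → E :=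
      fun j => ((Module.finBasis ℝ ↥(W ⊓ (V ⊓ W)ᗮ)) j : E)
    tupleVol (Fin.append v w) / (tupleVol v * tupleVol w)

/-!
If `V` and `W` are nested, `σ(V, W) = 1` by definition. Otherwise `V ⊓ (V ⊓ W)ᗮ` and
`W ⊓ (V ⊓ W)ᗮ` meet only in `0`, so the concatenation of their bases is linearly independent and
all three Gram determinants in `σ` are positive. The bound `σ ≤ 1` is Fischer's inequality
`det [[A, B], [Bᴴ, D]] ≤ det A · det D` for the Gram matrix of the concatenation: by the Schur
complement the left side is `det A · det (D - Bᴴ A⁻¹ B)`, and `0 ≤ D - Bᴴ A⁻¹ B ≤ D`.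
-/

open Matrix Submodule
open scoped RealInnerProductSpace MatrixOrder

namespace Matrix

variable {n : Type*} [Fintype n] [DecidableEq n]

theorem PosSemidef.det_le_one {X : Matrix n n ℝ} (hX : X.PosSemidef) (hX1 : X ≤ 1) :
    X.det ≤ 1 := by
  rw [hX.1.det_eq_prod_eigenvalues]
  refine Finset.prod_le_one (fun i _ => hX.eigenvalues_nonneg i) fun i _ => ?_
  set u : n → ℝ := ⇑(hX.1.eigenvectorBasis i)
  have hu : star u ⬝ᵥ u = 1 := by
    change ⟪hX.1.eigenvectorBasis i, hX.1.eigenvectorBasis i⟫ = 1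
    rw [real_inner_self_eq_norm_sq, hX.1.eigenvectorBasis.orthonormal.1 i, one_pow]
  have h := (le_iff.mp hX1).dotProduct_mulVec_nonneg u
  rw [sub_mulVec, dotProduct_sub, one_mulVec, hu, sub_nonneg] at h
  simpa [hX.1.eigenvalues_eq i] using h

/-- Conjugating by `N^{-1/2}` reduces the claim to `PosSemidef.det_le_one`. -/
theorem PosSemidef.det_le_det {M N : Matrix n n ℝ} (hM : M.PosSemidef) (hN : N.PosDef)
    (hMN : M ≤ N) : M.det ≤ N.det := by
  set S := CFC.sqrt N
  have hS : S.PosSemidef := nonneg_iff_posSemidef.mp (CFC.sqrt_nonneg N)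
  have hSS : S * S = N := CFC.sqrt_mul_sqrt_self N hN.posSemidef.nonneg
  have hdetS : S.det * S.det = N.det := by rw [← det_mul, hSS]
  have hSunit : IsUnit S.det :=
    isUnit_iff_ne_zero.mpr fun h => hN.det_pos.ne' (by rw [← hdetS, h, zero_mul])
  have hSinv : (S⁻¹)ᴴ = S⁻¹ := hS.1.inv.eq
  have hX : (S⁻¹ * M * S⁻¹).PosSemidef := by
    simpa only [hSinv] using hM.conjTranspose_mul_mul_same S⁻¹
  have hX1 : S⁻¹ * M * S⁻¹ ≤ 1 := by
    have hone : S⁻¹ * N * S⁻¹ = 1 := by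
      rw [← hSS, ← mul_assoc, nonsing_inv_mul S hSunit, one_mul, mul_nonsing_inv S hSunit]
    have := (le_iff.mp hMN).conjTranspose_mul_mul_same S⁻¹
    rwa [hSinv, mul_sub, sub_mul, hone, ← le_iff] at this
  have hM_eq : M = S * (S⁻¹ * M * S⁻¹) * S := by
    simp only [← mul_assoc, mul_nonsing_inv S hSunit, one_mul]
    rw [mul_assoc, nonsing_inv_mul S hSunit, mul_one]
  calc M.det = (S.det * S.det) * (S⁻¹ * M * S⁻¹).det := by
        conv_lhs => rw [hM_eq]
        rw [det_mul, det_mul]; ring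
    _ ≤ (S.det * S.det) * 1 := by gcongr; exacts [hdetS ▸ hN.det_pos.le, hX.det_le_one hX1]
    _ = N.det := by rw [mul_one, hdetS]

/-- Fischer's inequality. -/
theorem PosSemidef.det_fromBlocks_le {m : Type*} [Fintype m] [DecidableEq m]
    {A : Matrix m m ℝ} {B : Matrix m n ℝ} {D : Matrix n n ℝ} (hA : A.PosDef) (hD : D.PosDef)
    (h : (fromBlocks A B Bᴴ D).PosSemidef) :
    (fromBlocks A B Bᴴ D).det ≤ A.det * D.det := by
  have := A.invertibleOfIsUnitDet hA.det_pos.ne'.isUnit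
  rw [det_fromBlocks₁₁, invOf_eq_nonsing_inv]
  have hSchur := (PosDef.fromBlocks₁₁ B D hA).mp h
  have hle : D - Bᴴ * A⁻¹ * B ≤ D :=
    sub_le_self D (nonneg_iff_posSemidef.mpr (hA.inv.posSemidef.conjTranspose_mul_mul_same B))
  exact mul_le_mul_of_nonneg_left (hSchur.det_le_det hD hle) hA.det_pos.le

end Matrix

section Gram

variable {E : Type*} [NormedAddCommGroup E] [InnerProductSpace ℝ E]

theorem gram_sumElim {ι κ : Type*} (v : ι → E) (w : κ → E) :
    gram ℝ (Sum.elim v w) = fromBlocks (gram ℝ v) (of fun i j => ⟪v i, w j⟫)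
      (of fun i j => ⟪v i, w j⟫)ᴴ (gram ℝ w) := by
  ext (i | i) (j | j) <;> simp [real_inner_comm]

theorem det_gram_sumElim_le {ι κ : Type*} [Fintype ι] [DecidableEq ι] [Fintype κ]
    [DecidableEq κ] {v : ι → E} {w : κ → E} (hv : LinearIndependent ℝ v)
    (hw : LinearIndependent ℝ w) :
    (gram ℝ (Sum.elim v w)).det ≤ (gram ℝ v).det * (gram ℝ w).det := by
  have h := posSemidef_gram ℝ (Sum.elim v w)
  rw [gram_sumElim] at h ⊢
  exact h.det_fromBlocks_le (posDef_gram_of_linearIndependent hv)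
    (posDef_gram_of_linearIndependent hw)

theorem det_gram_append {k l : ℕ} (v : Fin k → E) (w : Fin l → E) :
    (gram ℝ (Fin.append v w)).det = (gram ℝ (Sum.elim v w)).det := by
  rw [← det_submatrix_equiv_self finSumFinEquiv]
  congr 1
  ext (i | i) (j | j) <;> simp

theorem tupleVol_eq_sqrt_det_gram {k : ℕ} (f : Fin k → E) :
    tupleVol f = √(gram ℝ f).det := rfl

theorem tupleVol_pos {k : ℕ} {f : Fin k → E} (hf : LinearIndependent ℝ f) : 0 < tupleVol f :=
  Real.sqrt_pos.mpr (posDef_gram_of_linearIndependent hf).det_pos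

theorem tupleVol_append_le {k l : ℕ} {v : Fin k → E} {w : Fin l → E}
    (hv : LinearIndependent ℝ v) (hw : LinearIndependent ℝ w) :
    tupleVol (Fin.append v w) ≤ tupleVol v * tupleVol w := by
  simp only [tupleVol_eq_sqrt_det_gram]
  rw [← Real.sqrt_mul (posSemidef_gram ℝ v).det_nonneg, det_gram_append]
  exact Real.sqrt_le_sqrt (det_gram_sumElim_le hv hw)

theorem tupleVol_append_div_mem_Ioc {k l : ℕ} {v : Fin k → E} {w : Fin l → E}
    (hv : LinearIndependent ℝ v) (hw : LinearIndependent ℝ w)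
    (hvw : LinearIndependent ℝ (Fin.append v w)) :
    tupleVol (Fin.append v w) / (tupleVol v * tupleVol w) ∈ Set.Ioc 0 1 := by
  have hvol := mul_pos (tupleVol_pos hv) (tupleVol_pos hw)
  exact ⟨div_pos (tupleVol_pos hvw) hvol, (div_le_one hvol).mpr (tupleVol_append_le hv hw)⟩

end Gram

theorem Submodule.disjoint_inf_orthogonal_inf {𝕜 E : Type*} [RCLike 𝕜] [NormedAddCommGroup E]
    [InnerProductSpace 𝕜 E] (V W : Submodule 𝕜 E) :
    Disjoint (V ⊓ (V ⊓ W)ᗮ) (W ⊓ (V ⊓ W)ᗮ) := by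
  rw [disjoint_iff_inf_le]
  rintro x ⟨⟨hxV, hx⟩, hxW, -⟩
  exact (orthogonal_disjoint (V ⊓ W)).le_bot ⟨⟨hxV, hxW⟩, hx⟩

theorem Disjoint.linearIndependent_append_coe {R M : Type*} [Ring R] [AddCommGroup M]
    [Module R M] {P Q : Submodule R M} (hPQ : Disjoint P Q) {k l : ℕ}
    (b : Module.Basis (Fin k) R P) (c : Module.Basis (Fin l) R Q) :
    LinearIndependent R (Fin.append (fun i => (b i : M)) fun j => (c j : M)) := by
  have hb : LinearIndependent R fun i => (b i : M) :=
    b.linearIndependent.map' P.subtype P.ker_subtype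
  have hc : LinearIndependent R fun j => (c j : M) :=
    c.linearIndependent.map' Q.subtype Q.ker_subtype
  have h1 : span R (Set.range fun i => (b i : M)) ≤ P :=
    span_le.mpr <| Set.range_subset_iff.mpr fun i => (b i).2
  have h2 : span R (Set.range fun i => (c i : M)) ≤ Q :=
    span_le.mpr <| Set.range_subset_iff.mpr fun i => (c i).2
  have h := hb.sum_type hc (hPQ.mono h1 h2)
  exact (linearIndependent_equiv' finSumFinEquiv Fin.append_comp_sumElim).mp h

/-- The angle between two subspaces is strictly positive and at most `1`:
`σ(V,W) ∈ (0, 1]`. -/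
theorem stmt2 {E : Type*} [NormedAddCommGroup E] [InnerProductSpace ℝ E]
    [FiniteDimensional ℝ E] (V W : Submodule ℝ E) :
    0 < subAngle V W ∧ subAngle V W ≤ 1 := by
  rw [subAngle]
  split_ifs
  · exact ⟨one_pos, le_rfl⟩
  have hv := (Module.finBasis ℝ ↥(V ⊓ (V ⊓ W)ᗮ)).linearIndependent.map' _ (ker_subtype _)
  have hw := (Module.finBasis ℝ ↥(W ⊓ (V ⊓ W)ᗮ)).linearIndependent.map' _ (ker_subtype _)
  have hvw := (disjoint_inf_orthogonal_inf V W).linearIndependent_append_coe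
    (Module.finBasis ℝ ↥(V ⊓ (V ⊓ W)ᗮ)) (Module.finBasis ℝ ↥(W ⊓ (V ⊓ W)ᗮ))
  exact tupleVol_append_div_mem_Ioc hv hw hvw
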